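/- arXiv:2203.02724 — 2 statements merged into one kernel-verified Lean document; each statement's English description precedes it below -/
import Mathlib

section
/- If I = (m, n, s, t) is a minimal normalized scheduling instance, then for every processor p one has (w'_I(p) + 1)/s(p) ≥ ρ_I. -/
open Finset

/-- A scheduling instance on uniform processors: `m` processors with positive
speeds `s 1, …, s m`, and `n` tasks with positive sizes `t 1 ≥ … ≥ t n`
(tasks are given in non-increasing order of size, as assumed for LPT). -/
structure SchedInstance where
  m : ℕ
  n : ℕ
  s : ℕ → ℝ
  t : ℕ → ℝ
  hm : 1 ≤ m
  hn : 1 ≤ n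
  hs : ∀ p, 1 ≤ p → p ≤ m → 0 < s p
  ht : ∀ i, 1 ≤ i → i ≤ n → 0 < t i
  tsorted : ∀ i j, 1 ≤ i → i ≤ j → j ≤ n → t j ≤ t i

namespace SchedInstance

variable (I : SchedInstance)

/-- The set of processor indices `{1, …, m}`. -/
def procs : Finset ℕ := Finset.Icc 1 I.m

/-- The set of task indices `{1, …, n}`. -/
def tasks : Finset ℕ := Finset.Icc 1 I.n

lemma procs_nonempty : I.procs.Nonempty := Finset.nonempty_Icc.mpr I.hm

/-- A schedule assigns every task `i ∈ {1,…,n}` a processor `A i ∈ {1,…,m}`. -/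
def IsSchedule (A : ℕ → ℕ) : Prop := ∀ i ∈ I.tasks, A i ∈ I.procs

/-- Total size of the tasks assigned by `A` to processor `p`. -/
noncomputable def load (A : ℕ → ℕ) (p : ℕ) : ℝ :=
  ∑ i ∈ I.tasks.filter (fun i => A i = p), I.t i

/-- The makespan of a schedule `A` : the largest completion time
`(Σ_{A i = p} t i) / s p` over the processors `p`. -/
noncomputable def makespan (A : ℕ → ℕ) : ℝ :=
  I.procs.sup' I.procs_nonempty (fun p => I.load A p / I.s p)

/-- `OPT(I)`: the optimal (minimum) makespan over all schedules. -/
noncomputable def opt : ℝ := sInf {r | ∃ A, I.IsSchedule A ∧ I.makespan A = r}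

/-- The completion time of processor `p` if task `i` is added to it while the
current workloads are `w`. -/
noncomputable def cost (w : ℕ → ℝ) (i p : ℕ) : ℝ := (w p + I.t i) / I.s p

/-- The processor the LPT rule chooses for task `i` given current workloads `w` :
the smallest-index processor minimizing `(w p + t i) / s p`. -/
noncomputable def choose (w : ℕ → ℝ) (i : ℕ) : ℕ :=
  (I.procs.filter
    (fun p => I.cost w i p = I.procs.inf' I.procs_nonempty (I.cost w i))).min'
    (by
      obtain ⟨p, hp, hpe⟩ := Finset.exists_mem_eq_inf' I.procs_nonempty (I.cost w i)
      exact ⟨p, Finset.mem_filter.mpr ⟨hp, hpe.symm⟩⟩)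

/-- `lptW k p` : the workload of processor `p` after the LPT algorithm has
assigned tasks `1, …, k` (in this order). -/
noncomputable def lptW : ℕ → ℕ → ℝ
  | 0, _ => 0
  | (k + 1), p =>
      lptW k p + if I.choose (lptW k) (k + 1) = p ∧ k + 1 ≤ I.n then I.t (k + 1) else 0

/-- `A_I` : the LPT assignment; task `i` goes to the least-index processor
minimizing the resulting completion time, given the previous assignments. -/
noncomputable def lptA (i : ℕ) : ℕ := I.choose (I.lptW (i - 1)) i

/-- `LPT(I)` : the makespan of the LPT schedule. -/
noncomputable def lptTime : ℝ := I.makespan I.lptA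

/-- `ρ_I = LPT(I) / OPT(I)` : the approximation ratio of LPT on instance `I`. -/
noncomputable def ratio : ℝ := I.lptTime / I.opt

/-- `I` is normalized: `OPT(I) = 1`, speeds are non-increasing, and the
smallest task has size `t n = 1`. -/
def Normalized : Prop :=
  I.opt = 1 ∧ (∀ p q, 1 ≤ p → p ≤ q → q ≤ I.m → I.s q ≤ I.s p) ∧ I.t I.n = 1

/-- `I` is minimal: every strictly smaller instance has a strictly smaller
LPT approximation ratio. -/
def Minimal : Prop :=
  ∀ J : SchedInstance, J.m ≤ I.m → J.n ≤ I.n →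
    ¬(J.m = I.m ∧ J.n = I.n) → J.ratio < I.ratio

/-- `T_I(p)` : the tasks assigned to processor `p` by the LPT schedule. -/
noncomputable def T (p : ℕ) : Finset ℕ := I.tasks.filter (fun i => I.lptA i = p)

/-- `T'_I(p) = T_I(p) \ {n}` : the LPT tasks of `p`, without the last task. -/
noncomputable def T' (p : ℕ) : Finset ℕ := (I.T p).erase I.n

/-- `w'_I(p)` : the workload of `p` in the LPT schedule without the last task. -/
noncomputable def w' (p : ℕ) : ℝ := ∑ i ∈ I.T' p, I.t i

/-- `T*(p)` for a schedule `A` : the tasks assigned to processor `p` by `A`. -/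
noncomputable def Tstar (A : ℕ → ℕ) (p : ℕ) : Finset ℕ :=
  I.tasks.filter (fun i => A i = p)

/-- `w*(p)` for a schedule `A` : the workload of processor `p` under `A`. -/
noncomputable def wstar (A : ℕ → ℕ) (p : ℕ) : ℝ := ∑ i ∈ I.Tstar A p, I.t i

/-- `A` is an optimal schedule whose workloads satisfy `w*(1) ≥ … ≥ w*(m)`. -/
def IsSortedOptimal (A : ℕ → ℕ) : Prop :=
  I.IsSchedule A ∧ I.makespan A = I.opt ∧
    ∀ p q, 1 ≤ p → p ≤ q → q ≤ I.m → I.wstar A q ≤ I.wstar A p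

/-- Processor `p` dominates processor `q` (with respect to the optimal
schedule `A`): `s p ≤ s q` and there is `f : T*(q) → T'(p)` with
`t i ≥ Σ_{f j = i} t j` for every `i ∈ T'(p)`. -/
def Dominates (A : ℕ → ℕ) (p q : ℕ) : Prop :=
  I.s p ≤ I.s q ∧ ∃ f : ℕ → ℕ,
    (∀ j ∈ I.Tstar A q, f j ∈ I.T' p) ∧
    ∀ i ∈ I.T' p, (∑ j ∈ (I.Tstar A q).filter (fun j => f j = i), I.t j) ≤ I.t i

end SchedInstance

/-- The polynomial `P_m(x) = 2x^m − x^{m−1} − ⋯ − x − 2`. -/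
noncomputable def Pm (m : ℕ) (x : ℝ) : ℝ := 2 * x ^ m - (∑ k ∈ Finset.Ico 1 m, x ^ k) - 2

/-!
Let `q` be the processor to which LPT assigns the last task `n`. In a minimal instance `q`
attains the LPT makespan: otherwise dropping task `n` keeps the LPT makespan and does not
increase `OPT`, so the smaller instance would have ratio at least `ρ_I`. Hence
`ρ_I = LPT(I) = (w'(q) + t n) / s q`, and since LPT chose `q` greedily for task `n`, this is
at most `(w'(p) + t n) / s p` for every processor `p`; finally `t n = 1`.
-/

namespace SchedInstance

variable (I : SchedInstance)

lemma choose_spec (w : ℕ → ℝ) (i : ℕ) :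
    I.choose w i ∈ I.procs ∧ ∀ p ∈ I.procs, I.cost w i (I.choose w i) ≤ I.cost w i p := by
  have hmem : I.choose w i ∈ I.procs.filter
      (fun p => I.cost w i p = I.procs.inf' I.procs_nonempty (I.cost w i)) :=
    Finset.min'_mem _ _
  rw [Finset.mem_filter] at hmem
  exact ⟨hmem.1, fun p hp => hmem.2 ▸ Finset.inf'_le _ hp⟩

lemma lptA_mem_procs (i : ℕ) : I.lptA i ∈ I.procs := (I.choose_spec _ i).1

lemma cost_lptA_le {p : ℕ} (hp : p ∈ I.procs) (i : ℕ) :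
    I.cost (I.lptW (i - 1)) i (I.lptA i) ≤ I.cost (I.lptW (i - 1)) i p :=
  (I.choose_spec _ i).2 p hp

lemma s_pos_of_mem_procs {p : ℕ} (hp : p ∈ I.procs) : 0 < I.s p :=
  I.hs p (Finset.mem_Icc.mp hp).1 (Finset.mem_Icc.mp hp).2

lemma t_pos_of_mem_tasks {i : ℕ} (hi : i ∈ I.tasks) : 0 < I.t i :=
  I.ht i (Finset.mem_Icc.mp hi).1 (Finset.mem_Icc.mp hi).2

lemma one_mem_procs : 1 ∈ I.procs := Finset.mem_Icc.mpr ⟨le_rfl, I.hm⟩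

lemma last_mem_tasks : I.n ∈ I.tasks := Finset.mem_Icc.mpr ⟨I.hn, le_rfl⟩

lemma lptW_succ {k : ℕ} (hk : k + 1 ≤ I.n) (p : ℕ) :
    I.lptW (k + 1) p = I.lptW k p + if I.lptA (k + 1) = p then I.t (k + 1) else 0 := by
  simp [lptW, lptA, hk]

lemma lptW_last (p : ℕ) :
    I.lptW I.n p = I.lptW (I.n - 1) p + if I.lptA I.n = p then I.t I.n else 0 := by
  have := I.lptW_succ (k := I.n - 1) (by have := I.hn; omega) p
  rwa [Nat.sub_add_cancel I.hn] at this

lemma lptW_eq_sum {k : ℕ} (hk : k ≤ I.n) (p : ℕ) :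
    I.lptW k p = ∑ i ∈ Finset.Icc 1 k, if I.lptA i = p then I.t i else 0 := by
  induction k with
  | zero => simp [lptW]
  | succ k ih => rw [I.lptW_succ hk, ih (by omega), Finset.sum_Icc_succ_top (by omega)]

lemma load_lptA (p : ℕ) : I.load I.lptA p = I.lptW I.n p := by
  rw [lptW_eq_sum _ le_rfl, load, tasks, Finset.sum_filter]

lemma w'_eq_lptW (p : ℕ) : I.w' p = I.lptW (I.n - 1) p := by
  have htasks : I.tasks.erase I.n = Finset.Icc 1 (I.n - 1) := by
    ext i; simp only [tasks, Finset.mem_erase, Finset.mem_Icc]; omega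
  rw [lptW_eq_sum _ (Nat.sub_le _ _), w', T', T, ← Finset.filter_erase, htasks,
    Finset.sum_filter]

lemma lptW_nonneg (k p : ℕ) : 0 ≤ I.lptW k p := by
  induction k with
  | zero => simp [lptW]
  | succ k ih =>
    rw [lptW]
    split_ifs with h
    · linarith [I.ht (k + 1) (by omega) h.2]
    · linarith

lemma load_nonneg (A : ℕ → ℕ) (p : ℕ) : 0 ≤ I.load A p :=
  Finset.sum_nonneg fun _ hi => (I.t_pos_of_mem_tasks (Finset.mem_filter.mp hi).1).le

lemma t_last_div_sup_s_le_makespan {A : ℕ → ℕ} (hA : I.IsSchedule A) :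
    I.t I.n / I.procs.sup' I.procs_nonempty I.s ≤ I.makespan A := by
  have hq := hA _ I.last_mem_tasks
  have ht_le_load : I.t I.n ≤ I.load A (A I.n) :=
    Finset.single_le_sum (f := I.t)
      (fun _ hi => (I.t_pos_of_mem_tasks (Finset.mem_filter.mp hi).1).le)
      (Finset.mem_filter.mpr ⟨I.last_mem_tasks, rfl⟩)
  have hs := I.s_pos_of_mem_procs hq
  calc I.t I.n / I.procs.sup' I.procs_nonempty I.s
      ≤ I.t I.n / I.s (A I.n) := by
        gcongr
        · exact (I.t_pos_of_mem_tasks I.last_mem_tasks).le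
        · exact Finset.le_sup' _ hq
    _ ≤ I.load A (A I.n) / I.s (A I.n) := by gcongr
    _ ≤ I.makespan A := Finset.le_sup' (fun p => I.load A p / I.s p) hq

lemma isSchedule_const_one : I.IsSchedule fun _ => 1 :=
  fun _ _ => I.one_mem_procs

lemma opt_le_makespan {A : ℕ → ℕ} (hA : I.IsSchedule A) : I.opt ≤ I.makespan A :=
  csInf_le ⟨I.t I.n / I.procs.sup' I.procs_nonempty I.s,
    fun _ ⟨_, hB, hr⟩ => hr ▸ I.t_last_div_sup_s_le_makespan hB⟩ ⟨A, hA, rfl⟩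

lemma le_opt {r : ℝ} (h : ∀ A, I.IsSchedule A → r ≤ I.makespan A) : r ≤ I.opt :=
  le_csInf ⟨_, _, I.isSchedule_const_one, rfl⟩ fun _ ⟨A, hA, hr⟩ => hr ▸ h A hA

lemma opt_pos : 0 < I.opt := by
  have hs : 0 < I.procs.sup' I.procs_nonempty I.s :=
    (I.s_pos_of_mem_procs I.one_mem_procs).trans_le (Finset.le_sup' I.s I.one_mem_procs)
  exact (div_pos (I.t_pos_of_mem_tasks I.last_mem_tasks) hs).trans_le
    (I.le_opt fun _ => I.t_last_div_sup_s_le_makespan)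

lemma lptTime_nonneg : 0 ≤ I.lptTime :=
  (div_nonneg (I.load_nonneg _ 1) (I.s_pos_of_mem_procs I.one_mem_procs).le).trans
    (Finset.le_sup' (fun p => I.load I.lptA p / I.s p) I.one_mem_procs)

lemma ratio_le_ratio {J : SchedInstance} (hopt : J.opt ≤ I.opt)
    (hlpt : I.lptTime ≤ J.lptTime) : I.ratio ≤ J.ratio :=
  div_le_div₀ (I.lptTime_nonneg.trans hlpt) hlpt J.opt_pos hopt

/-- The instance consisting of the `k` largest tasks of `I`. -/
def truncate (k : ℕ) (hk : 1 ≤ k) (hkn : k ≤ I.n) : SchedInstance where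
  m := I.m
  n := k
  s := I.s
  t := I.t
  hm := I.hm
  hn := hk
  hs := I.hs
  ht := fun i h1 h2 => I.ht i h1 (h2.trans hkn)
  tsorted := fun i j h1 h2 h3 => I.tsorted i j h1 h2 (h3.trans hkn)

section truncate

variable {k : ℕ} (hk : 1 ≤ k) (hkn : k ≤ I.n)

lemma truncate_lptW {j : ℕ} (hj : j ≤ k) : (I.truncate k hk hkn).lptW j = I.lptW j := by
  induction j with
  | zero => rfl
  | succ j ih =>
    funext p
    have hJn : (I.truncate k hk hkn).n = k := rfl
    simp only [lptW, ih (by omega), hJn, show j + 1 ≤ k by omega, show j + 1 ≤ I.n by omega]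
    rfl

lemma truncate_load_lptA (p : ℕ) :
    (I.truncate k hk hkn).load (I.truncate k hk hkn).lptA p = I.lptW k p :=
  ((I.truncate k hk hkn).load_lptA p).trans (congrFun (I.truncate_lptW hk hkn le_rfl) p)

lemma truncate_makespan_le (A : ℕ → ℕ) :
    (I.truncate k hk hkn).makespan A ≤ I.makespan A := by
  refine Finset.sup'_le _ _ fun q hq => ?_
  refine le_trans ?_ (Finset.le_sup' (fun p => I.load A p / I.s p) hq)
  have hsub : (I.truncate k hk hkn).tasks ⊆ I.tasks := Finset.Icc_subset_Icc_right hkn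
  refine div_le_div_of_nonneg_right ?_ (I.s_pos_of_mem_procs hq).le
  exact Finset.sum_le_sum_of_subset_of_nonneg (Finset.filter_subset_filter _ hsub)
    fun _ hi _ => (I.t_pos_of_mem_tasks (Finset.mem_filter.mp hi).1).le

lemma truncate_opt_le : (I.truncate k hk hkn).opt ≤ I.opt :=
  I.le_opt fun A hA => ((I.truncate k hk hkn).opt_le_makespan
    fun i hi => hA i (Finset.Icc_subset_Icc_right hkn hi)).trans (I.truncate_makespan_le hk hkn A)

end truncate

lemma lptTime_le_of_minimal (hmin : I.Minimal) :
    I.lptTime ≤ I.lptW I.n (I.lptA I.n) / I.s (I.lptA I.n) := by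
  obtain ⟨r, hr, hmax⟩ := Finset.exists_mem_eq_sup' I.procs_nonempty
    (fun p => I.load I.lptA p / I.s p)
  have hT : I.lptTime = I.lptW I.n r / I.s r := by rw [lptTime, makespan, hmax, load_lptA]
  by_cases hrq : I.lptA I.n = r
  · rw [hT, hrq]
  have hWr : I.lptW I.n r = I.lptW (I.n - 1) r := by rw [lptW_last, if_neg hrq, add_zero]
  obtain hn1 | hn2 : I.n = 1 ∨ 2 ≤ I.n := by have := I.hn; omega
  · have : I.lptTime = 0 := by rw [hT, hWr, hn1]; simp [lptW]
    rw [this]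
    exact div_nonneg (I.lptW_nonneg _ _) (I.s_pos_of_mem_procs (I.lptA_mem_procs _)).le
  · set J := I.truncate (I.n - 1) (by omega) (Nat.sub_le _ _)
    have hlpt : I.lptTime ≤ J.lptTime := by
      rw [hT, hWr, ← I.truncate_load_lptA]
      exact Finset.le_sup' (fun p => J.load J.lptA p / J.s p) hr
    have hlt := hmin J le_rfl (Nat.sub_le _ _) fun ⟨_, h⟩ => by
      change I.n - 1 = I.n at h
      omega
    exact absurd (I.ratio_le_ratio (I.truncate_opt_le _ _) hlpt) hlt.not_ge

end SchedInstance

/-- If `I` is a minimal normalized instance, then `(w'_I(p) + 1) / s p ≥ ρ_I`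
for every processor `p`. -/
theorem ratio_le_w'_add_one_div_s (I : SchedInstance)
    (hnorm : I.Normalized) (hmin : I.Minimal)
    (p : ℕ) (hp1 : 1 ≤ p) (hpm : p ≤ I.m) :
    I.ratio ≤ (I.w' p + 1) / I.s p := by
  obtain ⟨hopt, -, htn⟩ := hnorm
  have hp : p ∈ I.procs := Finset.mem_Icc.mpr ⟨hp1, hpm⟩
  calc I.ratio = I.lptTime := by rw [SchedInstance.ratio, hopt, div_one]
    _ ≤ I.lptW I.n (I.lptA I.n) / I.s (I.lptA I.n) := I.lptTime_le_of_minimal hmin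
    _ = I.cost (I.lptW (I.n - 1)) I.n (I.lptA I.n) := by
      rw [SchedInstance.cost, SchedInstance.lptW_last, if_pos rfl]
    _ ≤ I.cost (I.lptW (I.n - 1)) I.n p := I.cost_lptA_le hp I.n
    _ = (I.w' p + 1) / I.s p := by rw [SchedInstance.cost, SchedInstance.w'_eq_lptW, htn]
end

section
/- Let ρ_m denote the unique positive real root of P_m. Then the sequence (ρ_m)_{m≥1} is strictly increasing, i.e., ρ_m > ρ_{m'} whenever m > m' ≥ 1, and moreover ρ_m < 3/2 for every m ≥ 1. -/
open Finset

/-!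
From `P_{m+1}(x) = P_m(x) + x^m (2x - 3)` we get `P_m(3/2) = 1`, and that `P_m(x)` decreases in `m`
for `0 < x < 3/2`. On `x > 0` the sign of `P_m(x)` is that of
`P_m(x) / x^m = 2 - ∑_{0<k<m} x^{k-m} - 2x^{-m}`, which is increasing in `x`. So a positive root of
`P_m` lies below every point where `P_m > 0`, such as `3/2`, and above every point where `P_m < 0`,
such as the positive root of `P_{m'}` for `m' < m`.
-/

lemma Pm_succ {m : ℕ} (hm : 1 ≤ m) (x : ℝ) :
    Pm (m + 1) x = Pm m x + x ^ m * (2 * x - 3) := by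
  unfold Pm
  rw [Finset.sum_Ico_succ_top hm]
  ring

lemma Pm_three_halves {m : ℕ} (hm : 1 ≤ m) : Pm m (3 / 2) = 1 := by
  induction m, hm using Nat.le_induction with
  | base => norm_num [Pm]
  | succ m hm ih => rw [Pm_succ hm, ih]; ring

lemma Pm_strictAntiOn {x : ℝ} (hx : 0 < x) (hx' : x < 3 / 2) :
    StrictAntiOn (fun m => Pm m x) (Set.Ici 1) := by
  intro m hm m' _ hmm'
  refine Nat.rel_of_forall_rel_succ_of_le_of_lt (· > ·) (f := fun m => Pm m x)
    (fun k hk => ?_) hm hmm'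
  have : x ^ k * (2 * x - 3) < 0 := mul_neg_of_pos_of_neg (by positivity) (by linarith)
  simp only [Pm_succ hk]
  linarith

lemma pow_mul_pow_le_pow_mul_pow {a b : ℝ} (ha : 0 ≤ a) (hab : a ≤ b) {k m : ℕ} (hkm : k ≤ m) :
    a ^ m * b ^ k ≤ b ^ m * a ^ k := by
  obtain ⟨j, rfl⟩ := Nat.exists_eq_add_of_le hkm
  have hb : 0 ≤ b := ha.trans hab
  calc a ^ (k + j) * b ^ k = a ^ k * b ^ k * a ^ j := by ring
    _ ≤ a ^ k * b ^ k * b ^ j := by gcongr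
    _ = b ^ (k + j) * a ^ k := by ring

lemma pow_mul_Pm_le_pow_mul_Pm (m : ℕ) {a b : ℝ} (ha : 0 < a) (hab : a ≤ b) :
    b ^ m * Pm m a ≤ a ^ m * Pm m b := by
  have hsum : a ^ m * ∑ k ∈ Finset.Ico 1 m, b ^ k ≤ b ^ m * ∑ k ∈ Finset.Ico 1 m, a ^ k := by
    rw [Finset.mul_sum, Finset.mul_sum]
    exact Finset.sum_le_sum fun k hk =>
      pow_mul_pow_le_pow_mul_pow ha.le hab (Finset.mem_Ico.mp hk).2.le
  have hpow : a ^ m ≤ b ^ m := pow_le_pow_left₀ ha.le hab m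
  unfold Pm
  linarith

lemma Pm_nonneg_of_root_le {m : ℕ} {ρ x : ℝ} (hρ : 0 < ρ) (hroot : Pm m ρ = 0) (hx : ρ ≤ x) :
    0 ≤ Pm m x := by
  have := pow_mul_Pm_le_pow_mul_Pm m hρ hx
  rw [hroot, mul_zero] at this
  exact nonneg_of_mul_nonneg_right this (by positivity)

lemma Pm_nonpos_of_le_root {m : ℕ} {ρ x : ℝ} (hx : 0 < x) (hroot : Pm m ρ = 0) (hxρ : x ≤ ρ) :
    Pm m x ≤ 0 := by
  have := pow_mul_Pm_le_pow_mul_Pm m hx hxρ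
  rw [hroot, mul_zero] at this
  exact nonpos_of_mul_nonpos_right this (pow_pos (hx.trans_le hxρ) m)

lemma lt_three_halves_of_Pm_eq_zero {m : ℕ} (hm : 1 ≤ m) {ρ : ℝ} (hroot : Pm m ρ = 0) :
    ρ < 3 / 2 := by
  by_contra! hρ
  have := Pm_nonpos_of_le_root (by norm_num) hroot hρ
  rw [Pm_three_halves hm] at this
  norm_num at this

/-- The sequence of unique positive roots `ρ_m` of `P_m` is strictly
increasing in `m`, and every `ρ_m` is less than `3/2`. -/
theorem rho_strictMono_and_lt_three_halves :
    (∀ m m' : ℕ, 1 ≤ m' → m' < m →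
      ∀ ρ ρ' : ℝ, 0 < ρ → Pm m ρ = 0 → 0 < ρ' → Pm m' ρ' = 0 → ρ' < ρ) ∧
    (∀ m : ℕ, 1 ≤ m → ∀ ρ : ℝ, 0 < ρ → Pm m ρ = 0 → ρ < 3 / 2) := by
  refine ⟨fun m m' hm' hmm' ρ ρ' hρ hroot hρ' hroot' => ?_,
    fun m hm ρ _ hroot => lt_three_halves_of_Pm_eq_zero hm hroot⟩
  have hneg : Pm m ρ' < 0 := by
    have := Pm_strictAntiOn hρ' (lt_three_halves_of_Pm_eq_zero hm' hroot') hm'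
      (hm'.trans hmm'.le) hmm'
    simpa only [hroot'] using this
  by_contra! hle
  exact (Pm_nonneg_of_root_le hρ hroot hle).not_gt hneg
end
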